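/- (Negative relative entropy of Gaussian conditionals as a Gaussian likelihood.) For every x ∈ ℝ^d, ∫_{ℝ^n} log( κ₂(x' | x)/κ₁(x' | x) )·κ₁(x' | x) dx' = log c + log N(y ; H·x, Σ₂), where y := b₂ − b₁ ∈ ℝ^n, H := A₁ − A₂, N(· ; H·x, Σ₂) is the Gaussian density with mean H·x and covariance Σ₂ evaluated at y, and log c = −(1/2)·[ trace(Σ₂⁻¹ Σ₁) − n·(1 + log 2π) − log det Σ₁ ]. The integral is with respect to Lebesgue measure on ℝ^n. -/

import Mathlib

open MeasureTheory Matrix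
open scoped BigOperators

/-- The Gaussian density on `ℝ^n` with mean `m` and (positive definite) covariance `S`:
`N(x'; m, S) = det(2π·S)^{-1/2} · exp(−(1/2)·(x'−m)ᵀ S⁻¹ (x'−m))`. -/
noncomputable def gaussianDensity {n : ℕ} (m : Fin n → ℝ)
    (S : Matrix (Fin n) (Fin n) ℝ) (x : Fin n → ℝ) : ℝ :=
  ((2 * Real.pi) • S).det ^ (-(1 : ℝ) / 2) *
    Real.exp (-(1 / 2) * ((x - m) ⬝ᵥ S⁻¹.mulVec (x - m)))

/-!
Substituting `x' = L u + m₁` with `L Lᵀ = Σ₁` turns `κ₁` into the standard Gaussian weight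
`(2π)^(-n/2) exp(-|u|²/2)`. Against that weight `1`, `u_j` and `u_j u_k` integrate to `1`, `0`
and `δ_jk`, so a quadratic polynomial `a + w ⬝ y + yᵀ Q y` in `y = x' - m₁` has expectation
`a + tr(Q Σ₁)` under `κ₁`. The log-ratio `log κ₂ - log κ₁` is such a polynomial, with
`Q = (Σ₁⁻¹ - Σ₂⁻¹)/2`, giving the term `(n - tr(Σ₂⁻¹ Σ₁))/2`; its constant term holds the
normalising constants and the Mahalanobis term `-(1/2) vᵀ Σ₂⁻¹ v` of the mean shift
`v = m₁ - m₂ = (A₁ - A₂) x - (b₂ - b₁)`, which is the log-likelihood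
`log N(b₂ - b₁; (A₁ - A₂) x, Σ₂)` up to its normalising constant.
-/

open Real

section StandardGaussian

lemma integrable_pow_mul_exp_neg_half_sq (k : ℕ) :
    Integrable fun t : ℝ => t ^ k * exp (-(1 / 2) * t ^ 2) := by
  simpa [Real.rpow_natCast] using integrable_rpow_mul_exp_neg_mul_sq (b := 1 / 2) (by norm_num)
    (s := k) (by linarith [k.cast_nonneg (α := ℝ)])

lemma integral_exp_neg_half_sq : ∫ t : ℝ, exp (-(1 / 2) * t ^ 2) = √(2 * π) := by
  rw [integral_gaussian]; congr 1; ring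

lemma integral_mul_exp_neg_half_sq : ∫ t : ℝ, t * exp (-(1 / 2) * t ^ 2) = 0 := by
  have h := integral_neg_eq_self (fun t : ℝ => t * exp (-(1 / 2) * t ^ 2)) volume
  simp only [neg_mul, even_two.neg_pow, integral_neg] at h ⊢
  linarith

open ProbabilityTheory in
lemma integral_sq_mul_exp_neg_half_sq : ∫ t : ℝ, t ^ 2 * exp (-(1 / 2) * t ^ 2) = √(2 * π) := by
  have hvar : ∫ t, t ^ 2 ∂gaussianReal 0 1 = 1 := by
    simpa [variance_eq_integral measurable_id'.aemeasurable, integral_id_gaussianReal]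
      using variance_fun_id_gaussianReal (μ := 0) (v := 1)
  rw [integral_gaussianReal_eq_integral_smul one_ne_zero, gaussianPDFReal_def] at hvar
  simp only [NNReal.coe_one, mul_one, sub_zero, smul_eq_mul] at hvar
  calc _ = √(2 * π) * ∫ t, (√(2 * π))⁻¹ * exp (-t ^ 2 / 2) * t ^ 2 := by
        rw [← integral_const_mul]; congr 1; funext t
        field_simp
    _ = _ := by rw [hvar, mul_one]

variable {ι : Type*} [Fintype ι]

lemma exp_neg_half_dotProduct_self (u : ι → ℝ) :
    exp (-(1 / 2) * (u ⬝ᵥ u)) = ∏ i, exp (-(1 / 2) * u i ^ 2) := by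
  rw [← exp_sum, dotProduct, Finset.mul_sum]
  simp [sq]

lemma monomial_mul_exp_neg_half_dotProduct_self (d : ι → ℕ) (u : ι → ℝ) :
    (∏ i, u i ^ d i) * exp (-(1 / 2) * (u ⬝ᵥ u)) = ∏ i, u i ^ d i * exp (-(1 / 2) * u i ^ 2) := by
  rw [exp_neg_half_dotProduct_self, Finset.prod_mul_distrib]

lemma integrable_monomial_mul_exp_neg_half_dotProduct_self (d : ι → ℕ) :
    Integrable fun u : ι → ℝ => (∏ i, u i ^ d i) * exp (-(1 / 2) * (u ⬝ᵥ u)) := by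
  simp only [monomial_mul_exp_neg_half_dotProduct_self]
  exact Integrable.fintype_prod fun i => integrable_pow_mul_exp_neg_half_sq (d i)

lemma integral_monomial_mul_exp_neg_half_dotProduct_self (d : ι → ℕ) :
    ∫ u : ι → ℝ, (∏ i, u i ^ d i) * exp (-(1 / 2) * (u ⬝ᵥ u))
      = ∏ i, ∫ t : ℝ, t ^ d i * exp (-(1 / 2) * t ^ 2) := by
  simp only [monomial_mul_exp_neg_half_dotProduct_self]
  exact integral_fintype_prod_volume_eq_prod (fun i t => t ^ d i * exp (-(1 / 2) * t ^ 2))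

lemma integrable_exp_neg_half_dotProduct_self :
    Integrable fun u : ι → ℝ => exp (-(1 / 2) * (u ⬝ᵥ u)) := by
  simpa using integrable_monomial_mul_exp_neg_half_dotProduct_self (ι := ι) 0

lemma integral_exp_neg_half_dotProduct_self :
    ∫ u : ι → ℝ, exp (-(1 / 2) * (u ⬝ᵥ u)) = √(2 * π) ^ Fintype.card ι := by
  have h := integral_monomial_mul_exp_neg_half_dotProduct_self (ι := ι) 0
  simp only [Pi.zero_apply, pow_zero, Finset.prod_const_one, one_mul] at h
  rw [h, integral_exp_neg_half_sq, Finset.prod_const, Finset.card_univ]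

end StandardGaussian

section StandardGaussianMoments

variable {ι : Type*} [Fintype ι] [DecidableEq ι]

lemma prod_pow_single (u : ι → ℝ) (j : ι) : ∏ i, u i ^ (Pi.single j 1 : ι → ℕ) i = u j := by
  simp [Pi.single_apply, pow_ite]

lemma prod_pow_single_add_single (u : ι → ℝ) (j k : ι) :
    ∏ i, u i ^ (Pi.single j 1 + Pi.single k 1 : ι → ℕ) i = u j * u k := by
  simp only [Pi.add_apply, pow_add, Finset.prod_mul_distrib, prod_pow_single]

lemma integrable_apply_mul_exp_neg_half_dotProduct_self (j : ι) :
    Integrable fun u : ι → ℝ => u j * exp (-(1 / 2) * (u ⬝ᵥ u)) := by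
  simpa only [prod_pow_single] using
    integrable_monomial_mul_exp_neg_half_dotProduct_self (Pi.single j 1)

lemma integral_apply_mul_exp_neg_half_dotProduct_self (j : ι) :
    ∫ u : ι → ℝ, u j * exp (-(1 / 2) * (u ⬝ᵥ u)) = 0 := by
  simp only [← prod_pow_single _ j, integral_monomial_mul_exp_neg_half_dotProduct_self]
  exact Finset.prod_eq_zero (Finset.mem_univ j) (by simpa using integral_mul_exp_neg_half_sq)

lemma integrable_apply_mul_apply_mul_exp_neg_half_dotProduct_self (j k : ι) :
    Integrable fun u : ι → ℝ => u j * u k * exp (-(1 / 2) * (u ⬝ᵥ u)) := by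
  simp only [← prod_pow_single_add_single _ j k]
  exact integrable_monomial_mul_exp_neg_half_dotProduct_self _

lemma integral_apply_mul_apply_mul_exp_neg_half_dotProduct_self (j k : ι) :
    ∫ u : ι → ℝ, u j * u k * exp (-(1 / 2) * (u ⬝ᵥ u))
      = if j = k then √(2 * π) ^ Fintype.card ι else 0 := by
  simp only [← prod_pow_single_add_single _ j k, integral_monomial_mul_exp_neg_half_dotProduct_self]
  split_ifs with hjk
  · subst hjk
    rw [← Finset.card_univ, ← Finset.prod_const]
    refine Finset.prod_congr rfl fun i _ => ?_
    by_cases hij : i = j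
    · subst hij; simpa using integral_sq_mul_exp_neg_half_sq
    · simpa [hij] using integral_exp_neg_half_sq
  · refine Finset.prod_eq_zero (Finset.mem_univ j) ?_
    simpa [Ne.symm hjk] using integral_mul_exp_neg_half_sq

end StandardGaussianMoments

section QuadraticMoment

variable {ι : Type*} [Fintype ι]

lemma quadratic_mul_eq_sum (a : ℝ) (w : ι → ℝ) (Q : Matrix ι ι ℝ) (u : ι → ℝ) (e : ℝ) :
    (a + w ⬝ᵥ u + u ⬝ᵥ Q *ᵥ u) * e
      = a * e + ∑ j, w j * (u j * e) + ∑ j, ∑ k, Q j k * (u j * u k * e) := by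
  simp only [dotProduct, mulVec, add_mul, Finset.sum_mul, Finset.mul_sum]
  congr 1
  · congr 1; exact Finset.sum_congr rfl fun j _ => by ring
  · exact Finset.sum_congr rfl fun j _ => Finset.sum_congr rfl fun k _ => by ring

variable [DecidableEq ι]

theorem integral_quadratic_mul_exp_neg_half_dotProduct_self (a : ℝ) (w : ι → ℝ)
    (Q : Matrix ι ι ℝ) :
    ∫ u : ι → ℝ, (a + w ⬝ᵥ u + u ⬝ᵥ Q *ᵥ u) * exp (-(1 / 2) * (u ⬝ᵥ u))
      = (a + Q.trace) * √(2 * π) ^ Fintype.card ι := by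
  have h₀ := (integrable_exp_neg_half_dotProduct_self (ι := ι)).const_mul a
  have h₁ : Integrable fun u : ι → ℝ => ∑ j, w j * (u j * exp (-(1 / 2) * (u ⬝ᵥ u))) :=
    integrable_finsetSum _ fun j _ =>
      (integrable_apply_mul_exp_neg_half_dotProduct_self j).const_mul _
  have h₂ j : Integrable fun u : ι → ℝ => ∑ k, Q j k * (u j * u k * exp (-(1 / 2) * (u ⬝ᵥ u))) :=
    integrable_finsetSum _ fun k _ =>
      (integrable_apply_mul_apply_mul_exp_neg_half_dotProduct_self j k).const_mul _
  have hQ j : ∫ u : ι → ℝ, ∑ k, Q j k * (u j * u k * exp (-(1 / 2) * (u ⬝ᵥ u)))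
      = Q j j * √(2 * π) ^ Fintype.card ι := by
    rw [integral_finsetSum _ fun k _ =>
      (integrable_apply_mul_apply_mul_exp_neg_half_dotProduct_self j k).const_mul _]
    simp only [integral_const_mul, integral_apply_mul_apply_mul_exp_neg_half_dotProduct_self,
      mul_ite, mul_zero, Finset.sum_ite_eq, Finset.mem_univ, if_true]
  simp only [quadratic_mul_eq_sum]
  rw [integral_add (h₀.fun_add h₁) (integrable_finsetSum _ fun j _ => h₂ j), integral_add h₀ h₁,
    integral_finsetSum _ fun j _ =>
      (integrable_apply_mul_exp_neg_half_dotProduct_self j).const_mul _,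
    integral_finsetSum _ fun j _ => h₂ j]
  simp only [hQ, integral_const_mul, integral_exp_neg_half_dotProduct_self,
    integral_apply_mul_exp_neg_half_dotProduct_self, mul_zero, Finset.sum_const_zero, trace,
    diag_apply, ← Finset.sum_mul]
  ring

end QuadraticMoment

theorem integral_comp_mulVec_add {ι : Type*} [Fintype ι] [DecidableEq ι] {L : Matrix ι ι ℝ}
    (hL : L.det ≠ 0) (c : ι → ℝ) (f : (ι → ℝ) → ℝ) :
    ∫ u, f (L *ᵥ u + c) = |L.det|⁻¹ * ∫ x, f x := by
  have hdet : LinearMap.det (toLin' L) ≠ 0 := by rwa [LinearMap.det_toLin']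
  let E : (ι → ℝ) ≃ᵐ (ι → ℝ) :=
    (LinearMap.equivOfDetNeZero _ hdet).toContinuousLinearEquiv.toHomeomorph.toMeasurableEquiv
  have hE : ⇑E = ⇑(toLin' L) := rfl
  have hmap : (volume : Measure (ι → ℝ)).map E = ENNReal.ofReal |L.det⁻¹| • volume := by
    rw [hE, Measure.map_linearMap_addHaar_eq_smul_addHaar _ hdet, LinearMap.det_toLin']
  calc ∫ u, f (L *ᵥ u + c) = ∫ u, f (E u + c) := rfl
    _ = ∫ y, f (y + c) ∂(volume.map E) := (integral_map_equiv E fun y => f (y + c)).symm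
    _ = |L.det|⁻¹ * ∫ y, f (y + c) := by
      rw [hmap, integral_smul_measure, ENNReal.toReal_ofReal (abs_nonneg _), abs_inv, smul_eq_mul]
    _ = |L.det|⁻¹ * ∫ x, f x := by rw [integral_add_right_eq_self f c]

section SquareRoot

variable {ι : Type*} [Fintype ι] [DecidableEq ι]

theorem Matrix.PosSemidef.exists_mul_transpose_eq {S : Matrix ι ι ℝ} (hS : S.PosSemidef) :
    ∃ L : Matrix ι ι ℝ, L * Lᵀ = S := by
  open MatrixOrder in
  exact ⟨CFC.sqrt S, by
    rw [show (CFC.sqrt S)ᵀ = CFC.sqrt S from (CFC.sqrt_nonneg S).posSemidef.1,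
      CFC.sqrt_mul_sqrt_self S hS.nonneg]⟩

variable {S L : Matrix ι ι ℝ}

lemma det_ne_zero_of_mul_transpose_eq (hS : S.PosDef) (hL : L * Lᵀ = S) : L.det ≠ 0 := by
  intro h
  have := hS.det_pos
  rw [← hL, det_mul, h, zero_mul] at this
  exact this.false

lemma transpose_mul_inv_mul_eq_one (hS : S.PosDef) (hL : L * Lᵀ = S) : Lᵀ * S⁻¹ * L = 1 := by
  have hu : IsUnit L.det := (det_ne_zero_of_mul_transpose_eq hS hL).isUnit
  have huT : IsUnit Lᵀ.det := by rwa [det_transpose]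
  rw [← hL, Matrix.mul_inv_rev, ← mul_assoc, mul_nonsing_inv _ huT, one_mul, nonsing_inv_mul _ hu]

end SquareRoot

lemma mulVec_dotProduct_mulVec_mulVec {ι : Type*} [Fintype ι] (L Q : Matrix ι ι ℝ) (u : ι → ℝ) :
    (L *ᵥ u) ⬝ᵥ Q *ᵥ (L *ᵥ u) = u ⬝ᵥ (Lᵀ * Q * L) *ᵥ u := by
  rw [dotProduct_mulVec, vecMul_mulVec, ← dotProduct_mulVec, mulVec_mulVec, mul_assoc]

lemma add_dotProduct_mulVec_add {ι : Type*} [Fintype ι] (P : Matrix ι ι ℝ) (y v : ι → ℝ) :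
    (y + v) ⬝ᵥ P *ᵥ (y + v) = y ⬝ᵥ P *ᵥ y + (P *ᵥ v + v ᵥ* P) ⬝ᵥ y + v ⬝ᵥ P *ᵥ v := by
  simp only [mulVec_add, dotProduct_add, add_dotProduct]
  rw [dotProduct_comm y (P *ᵥ v), dotProduct_mulVec v P y]
  ring

section GaussianDensity

variable {n : ℕ} {m : Fin n → ℝ} {S : Matrix (Fin n) (Fin n) ℝ}

lemma det_two_pi_smul (S : Matrix (Fin n) (Fin n) ℝ) :
    ((2 * π) • S).det = (2 * π) ^ n * S.det := by
  rw [det_smul, Fintype.card_fin]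

lemma gaussianDensity_pos (hS : S.PosDef) (x : Fin n → ℝ) : 0 < gaussianDensity m S x := by
  unfold gaussianDensity
  rw [det_two_pi_smul]
  have := hS.det_pos
  positivity

lemma log_gaussianDensity (hS : S.PosDef) (x : Fin n → ℝ) :
    log (gaussianDensity m S x)
      = -(1 / 2) * (n * log (2 * π) + log S.det) - 1 / 2 * ((x - m) ⬝ᵥ S⁻¹ *ᵥ (x - m)) := by
  have hdet := hS.det_pos
  unfold gaussianDensity
  rw [det_two_pi_smul, log_mul (by positivity) (exp_pos _).ne', log_rpow (by positivity),
    log_exp, log_mul (by positivity) hdet.ne', log_pow]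
  ring

lemma det_two_pi_smul_rpow_neg_half {L : Matrix (Fin n) (Fin n) ℝ} (hL : L * Lᵀ = S) :
    ((2 * π) • S).det ^ (-(1 : ℝ) / 2) = (√(2 * π) ^ n * |L.det|)⁻¹ := by
  have hsq : ((2 * π) • S).det = (√(2 * π) ^ n * |L.det|) ^ 2 := by
    rw [mul_pow, ← pow_mul, mul_comm n, pow_mul, sq_sqrt (by positivity), sq_abs, sq,
      det_two_pi_smul, ← hL, det_mul, det_transpose]
  rw [hsq, neg_div, rpow_neg (sq_nonneg _), ← sqrt_eq_rpow, sqrt_sq (by positivity)]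

lemma gaussianDensity_mulVec_add (hS : S.PosDef) {L : Matrix (Fin n) (Fin n) ℝ} (hL : L * Lᵀ = S)
    (u : Fin n → ℝ) :
    gaussianDensity m S (L *ᵥ u + m) = (√(2 * π) ^ n * |L.det|)⁻¹ * exp (-(1 / 2) * (u ⬝ᵥ u)) := by
  rw [gaussianDensity, det_two_pi_smul_rpow_neg_half hL, add_sub_cancel_right,
    mulVec_dotProduct_mulVec_mulVec, transpose_mul_inv_mul_eq_one hS hL, one_mulVec]

theorem integral_quadratic_mul_gaussianDensity (hS : S.PosDef) (a : ℝ) (w : Fin n → ℝ)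
    (Q : Matrix (Fin n) (Fin n) ℝ) :
    ∫ x, (a + w ⬝ᵥ (x - m) + (x - m) ⬝ᵥ Q *ᵥ (x - m)) * gaussianDensity m S x
      = a + (Q * S).trace := by
  obtain ⟨L, hL⟩ := hS.posSemidef.exists_mul_transpose_eq
  have hdet := det_ne_zero_of_mul_transpose_eq hS hL
  have key := integral_comp_mulVec_add hdet m
    fun x => (a + w ⬝ᵥ (x - m) + (x - m) ⬝ᵥ Q *ᵥ (x - m)) * gaussianDensity m S x
  simp only [gaussianDensity_mulVec_add hS hL, add_sub_cancel_right,
    mulVec_dotProduct_mulVec_mulVec, dotProduct_mulVec w, ← mul_assoc,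
    mul_right_comm _ (√(2 * π) ^ n * |L.det|)⁻¹, integral_mul_const,
    integral_quadratic_mul_exp_neg_half_dotProduct_self, Fintype.card_fin] at key
  have htr : (Lᵀ * Q * L).trace = (Q * S).trace := by
    rw [trace_mul_comm, ← mul_assoc, hL, trace_mul_comm]
  rw [htr] at key
  field_simp at key
  exact key.symm

/-- The linear coefficient is left unsymmetrised: its Gaussian integral vanishes anyway. -/
lemma log_gaussianDensity_div_gaussianDensity {S₁ S₂ : Matrix (Fin n) (Fin n) ℝ}
    (hS₁ : S₁.PosDef) (hS₂ : S₂.PosDef) (m₁ m₂ x : Fin n → ℝ) :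
    log (gaussianDensity m₂ S₂ x / gaussianDensity m₁ S₁ x)
      = (1 / 2 * (log S₁.det - log S₂.det) - 1 / 2 * ((m₁ - m₂) ⬝ᵥ S₂⁻¹ *ᵥ (m₁ - m₂)))
        + (-(1 / 2 : ℝ) • (S₂⁻¹ *ᵥ (m₁ - m₂) + (m₁ - m₂) ᵥ* S₂⁻¹)) ⬝ᵥ (x - m₁)
        + (x - m₁) ⬝ᵥ ((1 / 2 : ℝ) • (S₁⁻¹ - S₂⁻¹)) *ᵥ (x - m₁) := by
  rw [log_div (gaussianDensity_pos hS₂ x).ne' (gaussianDensity_pos hS₁ x).ne',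
    log_gaussianDensity hS₂, log_gaussianDensity hS₁,
    show x - m₂ = (x - m₁) + (m₁ - m₂) by abel]
  generalize x - m₁ = y
  rw [add_dotProduct_mulVec_add]
  simp only [smul_mulVec, sub_mulVec, smul_dotProduct, dotProduct_smul, dotProduct_sub, smul_eq_mul]
  ring

end GaussianDensity

/-- **Negative relative entropy of Gaussian conditionals as a Gaussian likelihood.**
For Gaussian conditionals `κᵢ(x' | x) = N(x'; Aᵢ x + bᵢ, Σᵢ)` with `Σ₁, Σ₂` positive
definite, for every `x ∈ ℝ^d`
`∫ log (κ₂(x'|x)/κ₁(x'|x)) · κ₁(x'|x) dx' = log c + log N(b₂ − b₁; (A₁ − A₂) x, Σ₂)`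
where `log c = −(1/2)·[tr(Σ₂⁻¹ Σ₁) − n·(1 + log 2π) − log det Σ₁]`;
the integral is over Lebesgue measure on `ℝ^n`. -/
theorem gaussian_conditional_relative_entropy_likelihood
    (d n : ℕ)
    (A₁ A₂ : Matrix (Fin n) (Fin d) ℝ) (b₁ b₂ : Fin n → ℝ)
    (S₁ S₂ : Matrix (Fin n) (Fin n) ℝ) (hS₁ : S₁.PosDef) (hS₂ : S₂.PosDef) :
    ∀ x : Fin d → ℝ,
      (∫ x' : Fin n → ℝ,
          Real.log (gaussianDensity (A₂.mulVec x + b₂) S₂ x' /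
              gaussianDensity (A₁.mulVec x + b₁) S₁ x') *
            gaussianDensity (A₁.mulVec x + b₁) S₁ x')
        = (-(1 / 2) *
            ((S₂⁻¹ * S₁).trace - (n : ℝ) * (1 + Real.log (2 * Real.pi))
              - Real.log S₁.det))
          + Real.log (gaussianDensity ((A₁ - A₂).mulVec x) S₂ (b₂ - b₁)) := by
  intro x
  have hshift : b₂ - b₁ - (A₁ - A₂) *ᵥ x = -((A₁ *ᵥ x + b₁) - (A₂ *ᵥ x + b₂)) := by
    rw [sub_mulVec]; abel
  have htr : (((1 / 2 : ℝ) • (S₁⁻¹ - S₂⁻¹)) * S₁).trace = 1 / 2 * (n - (S₂⁻¹ * S₁).trace) := by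
    rw [smul_mul, sub_mul, nonsing_inv_mul _ hS₁.det_pos.ne'.isUnit, trace_smul, trace_sub,
      trace_one, Fintype.card_fin, smul_eq_mul]
  simp only [log_gaussianDensity_div_gaussianDensity hS₁ hS₂]
  rw [integral_quadratic_mul_gaussianDensity hS₁, htr, log_gaussianDensity hS₂, hshift,
    mulVec_neg, neg_dotProduct, dotProduct_neg, neg_neg]
  ring
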